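/- Let d ≥ 2 and let 𝒫 ⊂ ℝ^d be the polytope defined by 0 ≤ x_i ≤ 2 for 1 ≤ i ≤ d−1, 0 ≤ x_d ≤ d, and x_1 + ··· + x_d ≤ d+1. For 1 ≤ i ≤ d−1, let y_i = (1, ..., 1, (i−1)d + i, i) ∈ ℤ^{d+1} (first d−1 coordinates equal to 1). Then y_i ∈ M*(𝒫) and y_i is M(𝒫)-irreducible, i.e., rdeg y_i = i. -/

import Mathlib

open Set

noncomputable section

/-- Lift a point of `ℝ^m` to height 1 in `ℝ^(m+1)`. -/
def lift {m : ℕ} (x : Fin m → ℝ) : Fin (m + 1) → ℝ := Fin.snoc x 1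

/-- A point with integer coordinates (a lattice point). -/
def isLat {n : ℕ} (x : Fin n → ℝ) : Prop := ∀ i, ∃ z : ℤ, x i = (z : ℝ)

/-- The cone `C(P)` generated by `P × {1}` (for convex `P`). -/
def coneOf {m : ℕ} (P : Set (Fin m → ℝ)) : Set (Fin (m + 1) → ℝ) :=
  {y | ∃ (c : ℝ) (p : Fin m → ℝ), 0 ≤ c ∧ p ∈ P ∧ y = c • lift p}

/-- The semigroup `M(P)` generated by the lattice points of `P × {1}`. -/
def Msemi {m : ℕ} (P : Set (Fin m → ℝ)) : AddSubmonoid (Fin (m + 1) → ℝ) :=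
  AddSubmonoid.closure {y | ∃ p ∈ P, isLat p ∧ y = lift p}

/-- `M*(P)`: the lattice points in the relative interior of `C(P)`. -/
def Mstar {m : ℕ} (P : Set (Fin m → ℝ)) : Set (Fin (m + 1) → ℝ) :=
  {y | y ∈ intrinsicInterior ℝ (coneOf P) ∧ isLat y}

/-- The degree: the last coordinate. -/
def deg {m : ℕ} (y : Fin (m + 1) → ℝ) : ℝ := y (Fin.last m)

/-- The reduced `P`-degree of `y`. -/
def rdeg {m : ℕ} (P : Set (Fin m → ℝ)) (y : Fin (m + 1) → ℝ) : ℝ :=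
  sInf {r | ∃ z w, z ∈ Mstar P ∧ w ∈ Msemi P ∧ y = z + w ∧ r = deg z}

/-- An empty lattice simplex: its only lattice points are its vertices. -/
def IsEmptyLatticeSimplex {m : ℕ} (s : Set (Fin m → ℝ)) : Prop :=
  ∃ (k : ℕ) (x : Fin (k + 1) → (Fin m → ℝ)), AffineIndependent ℝ x ∧
    (∀ i, isLat (x i)) ∧ s = convexHull ℝ (Set.range x) ∧
    (∀ p ∈ s, isLat p → p ∈ Set.range x)

/-- A lattice triangulation of `P`: a finite face-closed family of empty lattice
simplices covering `P`, with pairwise disjoint relative interiors (every point of `P`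
lies in the relative interior of exactly one simplex), and using every lattice point
of `P` as a vertex. -/
structure IsLatticeTriangulation {m : ℕ} (P : Set (Fin m → ℝ))
    (T : Set (Set (Fin m → ℝ))) : Prop where
  finite : T.Finite
  simplex : ∀ s ∈ T, IsEmptyLatticeSimplex s
  subset : ∀ s ∈ T, s ⊆ P
  partition : ∀ p ∈ P, ∃! s, s ∈ T ∧ p ∈ intrinsicInterior ℝ s
  vertex : ∀ p ∈ P, isLat p → {p} ∈ T


/-!
`yᵢ / i` satisfies every defining inequality of `𝒫` strictly, so `yᵢ` is an interior lattice point
of the cone. Suppose `yᵢ = z + w` with `z ∈ M*(𝒫)` and `w ∈ M(𝒫)`. The cone is full-dimensional,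
so `z` is a topological interior point and every facet inequality of the cone is strict at `z`,
while it holds weakly at `w`. The first `d - 1` coordinates of `yᵢ` equal `1`, hence the
corresponding (integral, nonnegative) coordinates of `w` vanish. The slack of `yᵢ` in the facet
`x₁ + ⋯ + x_d ≤ (d + 1) x_{d+1}` is exactly `1`, while `w` uses at least `deg w` of it because
`w_d ≤ d · deg w`; so the integer `deg w` is `< 1`, i.e. `deg w = 0` and `deg z = i`.
-/

open Filter Topology

lemma LinearMap.pos_of_nonneg_of_mem_interior {E : Type*} [AddCommGroup E] [Module ℝ E]
    [TopologicalSpace E] [IsTopologicalAddGroup E] [ContinuousSMul ℝ E] (f : E →ₗ[ℝ] ℝ)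
    {s : Set E} (hs : ∀ x ∈ s, 0 ≤ f x) {v : E} (hv : 0 < f v) {z : E} (hz : z ∈ interior s) :
    0 < f z := by
  have hcont : Continuous fun t : ℝ => z - t • v := by fun_prop
  have hlim : Tendsto (fun t : ℝ => z - t • v) (𝓝[>] 0) (𝓝 z) := by
    simpa using (hcont.tendsto 0).mono_left nhdsWithin_le_nhds
  obtain ⟨t, hts, ht⟩ :=
    ((hlim.eventually (mem_interior_iff_mem_nhds.1 hz)).and self_mem_nhdsWithin).exists
  have := hs _ hts
  rw [map_sub, map_smul, smul_eq_mul] at this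
  nlinarith [mul_pos (show (0 : ℝ) < t from ht) hv]

lemma intrinsicInterior_subset_interior_of_affineSpan_eq_top {V : Type*} [AddCommGroup V]
    [Module ℝ V] [TopologicalSpace V] {s : Set V} (h : affineSpan ℝ s = ⊤) :
    intrinsicInterior ℝ s ⊆ interior s := by
  rintro x ⟨y, hy, rfl⟩
  have hopen : IsOpen (affineSpan ℝ s : Set V) := by simp [h]
  exact interior_mono (image_preimage_subset _ _)
    (hopen.isOpenEmbedding_subtypeVal.isOpenMap.image_interior_subset _ (mem_image_of_mem _ hy))

lemma eq_zero_of_intCast_of_nonneg_of_lt_one {x : ℝ} (hx : ∃ n : ℤ, x = n) (h0 : 0 ≤ x)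
    (h1 : x < 1) : x = 0 := by
  obtain ⟨n, rfl⟩ := hx
  norm_cast at *
  omega

section Cone

variable {m : ℕ} {P : Set (Fin m → ℝ)}

@[simp]
lemma lift_castSucc (x : Fin m → ℝ) (j : Fin m) : lift x j.castSucc = x j :=
  Fin.snoc_castSucc ..

@[simp]
lemma lift_last (x : Fin m → ℝ) : lift x (Fin.last m) = 1 :=
  Fin.snoc_last (α := fun _ => ℝ) ..

@[simp]
lemma deg_lift (x : Fin m → ℝ) : deg (lift x) = 1 :=
  lift_last x

lemma isLat_lift {p : Fin m → ℝ} (hp : isLat p) : isLat (lift p) := by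
  intro k
  induction k using Fin.lastCases with
  | last => exact ⟨1, by simp⟩
  | cast j => simpa using hp j

lemma isLat_of_mem_Msemi {w : Fin (m + 1) → ℝ} (hw : w ∈ Msemi P) : isLat w := by
  induction hw using AddSubmonoid.closure_induction with
  | mem w hw => obtain ⟨p, -, hp, rfl⟩ := hw; exact isLat_lift hp
  | zero => exact fun _ => ⟨0, by simp⟩
  | add w w' _ _ h h' =>
    intro k
    obtain ⟨a, ha⟩ := h k
    obtain ⟨b, hb⟩ := h' k
    exact ⟨a + b, by simp [ha, hb]⟩

lemma eq_deg_smul_lift_init {y : Fin (m + 1) → ℝ} (hy : deg y ≠ 0) :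
    y = deg y • lift ((deg y)⁻¹ • Fin.init y) := by
  ext k
  induction k using Fin.lastCases with
  | last => simp [deg]
  | cast j => simp [Fin.init, mul_inv_cancel_left₀ hy]

lemma mem_interior_coneOf {y : Fin (m + 1) → ℝ} (hy : 0 < deg y)
    (hP : (deg y)⁻¹ • Fin.init y ∈ interior P) : y ∈ interior (coneOf P) := by
  have hcont : ContinuousAt (fun y : Fin (m + 1) → ℝ => (deg y)⁻¹ • Fin.init y) y :=
    ((continuous_apply (Fin.last m)).continuousAt.inv₀ hy.ne').smul
      (continuous_pi fun j => continuous_apply j.castSucc).continuousAt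
  rw [mem_interior_iff_mem_nhds]
  filter_upwards [(continuous_apply (Fin.last m)).continuousAt.eventually_mem (Ioi_mem_nhds hy),
    hcont.eventually_mem (isOpen_interior.mem_nhds hP)] with y' hpos hint
  rw [eq_deg_smul_lift_init hpos.ne']
  exact ⟨_, _, hpos.le, interior_subset hint, rfl⟩

variable (f : (Fin (m + 1) → ℝ) →ₗ[ℝ] ℝ)

lemma nonneg_of_mem_coneOf (hf : ∀ p ∈ P, 0 ≤ f (lift p)) {y : Fin (m + 1) → ℝ}
    (hy : y ∈ coneOf P) : 0 ≤ f y := by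
  obtain ⟨c, p, hc, hp, rfl⟩ := hy
  simpa using mul_nonneg hc (hf p hp)

lemma pos_of_mem_interior_coneOf (hf : ∀ p ∈ P, 0 ≤ f (lift p)) {v : Fin (m + 1) → ℝ}
    (hv : 0 < f v) {z : Fin (m + 1) → ℝ} (hz : z ∈ interior (coneOf P)) : 0 < f z :=
  f.pos_of_nonneg_of_mem_interior (fun _ hy => nonneg_of_mem_coneOf f hf hy) hv hz

lemma nonneg_of_mem_Msemi (hf : ∀ p ∈ P, 0 ≤ f (lift p)) {w : Fin (m + 1) → ℝ}
    (hw : w ∈ Msemi P) : 0 ≤ f w := by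
  induction hw using AddSubmonoid.closure_induction with
  | mem w hw => obtain ⟨p, hp, -, rfl⟩ := hw; exact hf p hp
  | zero => simp
  | add w w' _ _ h h' => simpa using add_nonneg h h'

end Cone

section Polytope

variable {d : ℕ}

def topIdx (d : ℕ) [NeZero d] : Fin d := ⟨d - 1, Nat.sub_one_lt (NeZero.ne d)⟩

def polytope (d : ℕ) [NeZero d] : Set (Fin d → ℝ) :=
  {x | (∀ j : Fin d, (j : ℕ) < d - 1 → 0 ≤ x j ∧ x j ≤ 2) ∧
    (0 ≤ x (topIdx d) ∧ x (topIdx d) ≤ d) ∧ ∑ j, x j ≤ d + 1}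

def yPoint (d i : ℕ) : Fin (d + 1) → ℝ := fun k =>
  if (k : ℕ) < d - 1 then 1 else if (k : ℕ) = d - 1 then ((i : ℝ) - 1) * d + i else i

def sumSlack (d : ℕ) : (Fin (d + 1) → ℝ) →ₗ[ℝ] ℝ :=
  ((d : ℝ) + 1) • LinearMap.proj (Fin.last d) - ∑ j : Fin d, LinearMap.proj j.castSucc

def topSlack (d : ℕ) [NeZero d] : (Fin (d + 1) → ℝ) →ₗ[ℝ] ℝ :=
  (d : ℝ) • LinearMap.proj (Fin.last d) - LinearMap.proj (topIdx d).castSucc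

lemma sumSlack_apply (y : Fin (d + 1) → ℝ) :
    sumSlack d y = (d + 1) * deg y - ∑ j : Fin d, y j.castSucc := by
  simp [sumSlack, deg]

lemma yPoint_castSucc_of_lt (i : ℕ) {j : Fin d} (hj : (j : ℕ) < d - 1) :
    yPoint d i j.castSucc = 1 :=
  if_pos hj

lemma isLat_yPoint (i : ℕ) : isLat (yPoint d i) := by
  intro k
  unfold yPoint
  split_ifs
  exacts [⟨1, by simp⟩, ⟨(i - 1) * d + i, by push_cast; ring⟩, ⟨i, by simp⟩]

variable [NeZero d]

lemma topSlack_apply (y : Fin (d + 1) → ℝ) :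
    topSlack d y = d * deg y - y (topIdx d).castSucc := by
  simp [topSlack, deg]

lemma sumSlack_lift_nonneg {p : Fin d → ℝ} (hp : p ∈ polytope d) : 0 ≤ sumSlack d (lift p) := by
  simpa [sumSlack_apply] using hp.2.2

lemma topSlack_lift_nonneg {p : Fin d → ℝ} (hp : p ∈ polytope d) : 0 ≤ topSlack d (lift p) := by
  simpa [topSlack_apply] using hp.2.1.2

lemma proj_lift_nonneg {p : Fin d → ℝ} (hp : p ∈ polytope d) {j : Fin d} (hj : (j : ℕ) < d - 1) :
    0 ≤ LinearMap.proj (R := ℝ) (φ := fun _ => ℝ) j.castSucc (lift p) := by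
  simpa using (hp.1 j hj).1

lemma mem_interior_polytope {x : Fin d → ℝ}
    (hlt : ∀ j : Fin d, (j : ℕ) < d - 1 → 0 < x j ∧ x j < 2)
    (htop : 0 < x (topIdx d) ∧ x (topIdx d) < d) (hsum : ∑ j, x j < d + 1) :
    x ∈ interior (polytope d) := by
  rw [mem_interior_iff_mem_nhds]
  filter_upwards [eventually_all.2 fun j => eventually_imp_distrib_left.2 fun hj =>
      (continuous_apply j).continuousAt.eventually_mem (Ioo_mem_nhds (hlt j hj).1 (hlt j hj).2),
    (continuous_apply _).continuousAt.eventually_mem (Ioo_mem_nhds htop.1 htop.2),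
    (continuous_finsetSum _ fun j _ => continuous_apply j).continuousAt.eventually_mem
      (Iio_mem_nhds hsum)] with x' hlt' htop' hsum'
  exact ⟨fun j hj => ⟨(hlt' j hj).1.le, (hlt' j hj).2.le⟩, ⟨htop'.1.le, htop'.2.le⟩, hsum'.le⟩

lemma yPoint_top (i : ℕ) : yPoint d i (topIdx d).castSucc = ((i : ℝ) - 1) * d + i := by
  simp [yPoint, topIdx]

lemma deg_yPoint (i : ℕ) : deg (yPoint d i) = i := by
  have := NeZero.ne d
  simp only [yPoint, deg, Fin.val_last]
  rw [if_neg (by omega), if_neg (by omega)]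

lemma sum_yPoint_castSucc (i : ℕ) : ∑ j : Fin d, yPoint d i j.castSucc = (d + 1) * i - 1 := by
  obtain ⟨m, rfl⟩ : ∃ m, d = m + 1 := ⟨d - 1, (Nat.succ_pred_eq_of_ne_zero (NeZero.ne d)).symm⟩
  rw [Fin.sum_univ_castSucc]
  simp only [yPoint, Fin.val_castSucc, add_tsub_cancel_right, Fin.is_lt, ↓reduceIte,
    Finset.sum_const, Finset.card_univ, Fintype.card_fin, nsmul_eq_mul, mul_one, Fin.val_last,
    lt_self_iff_false, Nat.cast_add, Nat.cast_one]
  ring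

lemma sumSlack_yPoint (i : ℕ) : sumSlack d (yPoint d i) = 1 := by
  rw [sumSlack_apply, sum_yPoint_castSucc, deg_yPoint]
  ring

end Polytope

section Irreducible

variable {d : ℕ} [NeZero d] {i : ℕ}

lemma yPoint_mem_interior_coneOf (hi : 1 ≤ i) (hid : i < d) :
    yPoint d i ∈ interior (coneOf (polytope d)) := by
  have hi' : (1 : ℝ) ≤ i := by exact_mod_cast hi
  have hid' : (i : ℝ) + 1 ≤ d := by exact_mod_cast hid
  have hipos : (0 : ℝ) < i := by positivity
  refine mem_interior_coneOf (by rw [deg_yPoint]; positivity) ?_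
  rw [deg_yPoint]
  apply mem_interior_polytope
  · intro j hj
    simp only [Pi.smul_apply, Fin.init, yPoint_castSucc_of_lt i hj, smul_eq_mul, mul_one]
    exact ⟨by positivity, by linarith [inv_le_one_of_one_le₀ hi']⟩
  · simp only [Pi.smul_apply, Fin.init, yPoint_top, smul_eq_mul]
    constructor
    · have : (0 : ℝ) < (i - 1) * d + i := by nlinarith
      positivity
    · rw [inv_mul_lt_iff₀ hipos]
      nlinarith
  · simp only [Pi.smul_apply, Fin.init, smul_eq_mul, ← Finset.mul_sum, sum_yPoint_castSucc]
    rw [inv_mul_lt_iff₀ hipos]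
    nlinarith

lemma yPoint_mem_Mstar (hi : 1 ≤ i) (hid : i < d) : yPoint d i ∈ Mstar (polytope d) :=
  ⟨interior_subset_intrinsicInterior (yPoint_mem_interior_coneOf hi hid), isLat_yPoint i⟩

lemma deg_eq_of_yPoint_eq_add {z w : Fin (d + 1) → ℝ} (hz : z ∈ interior (coneOf (polytope d)))
    (hw : w ∈ Msemi (polytope d)) (h : yPoint d i = z + w) : deg z = i := by
  have hz_eq : z = yPoint d i - w := eq_sub_of_add_eq h.symm
  have hw_lat := isLat_of_mem_Msemi hw
  have hw_zero : ∀ j : Fin d, (j : ℕ) < d - 1 → w j.castSucc = 0 := by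
    intro j hj
    have hz_pos : 0 < z j.castSucc := pos_of_mem_interior_coneOf (LinearMap.proj j.castSucc)
      (fun p hp => proj_lift_nonneg hp hj) (v := Pi.single j.castSucc 1) (by simp) hz
    rw [hz_eq, Pi.sub_apply, yPoint_castSucc_of_lt i hj] at hz_pos
    exact eq_zero_of_intCast_of_nonneg_of_lt_one (hw_lat _)
      (nonneg_of_mem_Msemi _ (fun p hp => proj_lift_nonneg hp hj) hw) (by linarith)
  have hw_sum : ∑ j : Fin d, w j.castSucc = w (topIdx d).castSucc := by
    refine Finset.sum_eq_single _ (fun j _ hj => hw_zero j ?_) (by simp)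
    have := Fin.val_ne_of_ne hj
    simp only [topIdx] at this
    omega
  have hz_slack : 0 < sumSlack d z := pos_of_mem_interior_coneOf _
    (fun p hp => sumSlack_lift_nonneg hp) (v := Pi.single (Fin.last d) 1)
    (by simp [sumSlack_apply, deg]; positivity) hz
  have hw_top := nonneg_of_mem_Msemi _ (fun p hp => topSlack_lift_nonneg hp) hw
  have hw_deg : 0 ≤ deg w :=
    nonneg_of_mem_Msemi (LinearMap.proj (Fin.last d)) (fun p _ => by simp) hw
  rw [hz_eq, map_sub, sumSlack_yPoint, sumSlack_apply, hw_sum] at hz_slack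
  rw [topSlack_apply] at hw_top
  -- `0 < sumSlack z = 1 - (d + 1) deg w + w_d ≤ 1 - deg w`
  have : deg w = 0 :=
    eq_zero_of_intCast_of_nonneg_of_lt_one (hw_lat _) hw_deg (by nlinarith)
  calc deg z = deg (yPoint d i) - deg w := by rw [hz_eq]; rfl
    _ = i := by rw [deg_yPoint, this, sub_zero]

lemma rdeg_yPoint (hi : 1 ≤ i) (hid : i < d) : rdeg (polytope d) (yPoint d i) = i := by
  have hspan : affineSpan ℝ (coneOf (polytope d)) = ⊤ := affineSpan_eq_top_of_nonempty_interior
    ⟨_, interior_mono (subset_convexHull ℝ _) (yPoint_mem_interior_coneOf hi hid)⟩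
  suffices {r | ∃ z w, z ∈ Mstar (polytope d) ∧ w ∈ Msemi (polytope d) ∧
      yPoint d i = z + w ∧ r = deg z} = {(i : ℝ)} by rw [rdeg, this, csInf_singleton]
  ext r
  constructor
  · rintro ⟨z, w, hz, hw, h, rfl⟩
    exact deg_eq_of_yPoint_eq_add
      (intrinsicInterior_subset_interior_of_affineSpan_eq_top hspan hz.1) hw h
  · rintro rfl
    exact ⟨_, 0, yPoint_mem_Mstar hi hid, zero_mem _, (add_zero _).symm, (deg_yPoint i).symm⟩

end Irreducible

/-- for the polytope `0 ≤ xᵢ ≤ 2` (`i < d`), `0 ≤ x_d ≤ d`,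
`x₁ + ⋯ + x_d ≤ d + 1`, the points `yᵢ = (1,…,1,(i−1)d+i,i)` lie in `M*(P)` and are
`M(P)`-irreducible, i.e. `rdeg yᵢ = i`, for `1 ≤ i ≤ d - 1`. -/
theorem stmt14 {d : ℕ} (hd : 2 ≤ d) (P : Set (Fin d → ℝ))
    (hP : P = {x : Fin d → ℝ |
      (∀ i : Fin d, (i : ℕ) < d - 1 → 0 ≤ x i ∧ x i ≤ 2) ∧
      (0 ≤ x ⟨d - 1, by omega⟩ ∧ x ⟨d - 1, by omega⟩ ≤ (d : ℝ)) ∧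
      (∑ i, x i) ≤ (d : ℝ) + 1}) :
    ∀ i : ℕ, 1 ≤ i → i ≤ d - 1 →
      (fun k : Fin (d + 1) => if (k : ℕ) < d - 1 then (1 : ℝ)
        else if (k : ℕ) = d - 1 then ((i : ℝ) - 1) * d + i else (i : ℝ)) ∈ Mstar P ∧
      rdeg P (fun k : Fin (d + 1) => if (k : ℕ) < d - 1 then (1 : ℝ)
        else if (k : ℕ) = d - 1 then ((i : ℝ) - 1) * d + i else (i : ℝ)) = (i : ℝ) := by
  intro i hi hid
  have : NeZero d := ⟨by omega⟩
  obtain rfl : P = polytope d := hP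
  exact ⟨yPoint_mem_Mstar hi (by omega), rdeg_yPoint hi (by omega)⟩
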